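/- Let 1 ≤ ℓ < k ≤ K and let coefficients c_{j,i} ∈ [0,1] be given for ℓ ≤ i ≤ j ≤ k with c_{j,j} = 1 for all j. If for every pair ℓ ≤ i < j ≤ k one has c_{j,i} ≤ Σ_{i'=i+1}^{j} c_{j,i'} · r_min(X_{i'},S_i), then c_{j,ℓ} ≤ h_min(X_j,S_ℓ) for every ℓ < j ≤ k. -/

import Mathlib

open Finset

/-- A finite state space partitioned into fitness levels `S_0, …, S_K`
(`lev x = k` means `x ∈ S_k`), together with an elitist row-stochastic
transition matrix `p`. -/
structure LevelChain (S : Type*) [Fintype S] where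
  /-- the number of non-optimal levels -/
  K : ℕ
  /-- the level of each state -/
  lev : S → ℕ
  one_le_K : 1 ≤ K
  lev_le : ∀ x, lev x ≤ K
  level_nonempty : ∀ k ≤ K, ∃ x, lev x = k
  /-- transition probabilities -/
  p : S → S → ℝ
  p_nonneg : ∀ x y, 0 ≤ p x y
  p_row_sum : ∀ x, ∑ y, p x y = 1
  elitist : ∀ x y, lev x < lev y → p x y = 0

variable {S : Type*} [Fintype S]

/-- The fitness level `S_k`. -/
def LevelChain.level (c : LevelChain S) (k : ℕ) : Finset S :=
  Finset.univ.filter fun x => c.lev x = k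

/-- The union of levels `S_{[i,j]} = S_i ∪ ⋯ ∪ S_j`. -/
def LevelChain.levels (c : LevelChain S) (i j : ℕ) : Finset S :=
  Finset.univ.filter fun x => i ≤ c.lev x ∧ c.lev x ≤ j

/-- `p(x, A) = Σ_{y ∈ A} p(x, y)`. -/
def LevelChain.pSet (c : LevelChain S) (x : S) (A : Finset S) : ℝ :=
  ∑ y ∈ A, c.p x y

/-- The standing reachability assumption: from every non-optimal state one can
move to a better level with positive probability. -/
def LevelChain.Reachable (c : LevelChain S) : Prop :=
  ∀ k, 1 ≤ k → k ≤ c.K → ∀ x, c.lev x = k → 0 < c.pSet x (c.levels 0 (k - 1))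

/-- Conditional transition probability `r(x, S_j)`:
`r(x,S_j) = p(x,S_j)/(1 − p(x,S_k))` for `j ≠ k = lev x`, and `r(x,S_k) = 0`. -/
noncomputable def LevelChain.r (c : LevelChain S) (x : S) (j : ℕ) : ℝ :=
  if j = c.lev x then 0
  else c.pSet x (c.level j) / (1 - c.pSet x (c.level (c.lev x)))

/-- `r_min(X_k, S_j) = min_{x ∈ S_k} r(x, S_j)`. -/
noncomputable def LevelChain.rmin (c : LevelChain S) (k j : ℕ) : ℝ :=
  sInf ((fun x => c.r x j) '' {x | c.lev x = k})

/-- `r_max(X_k, S_j) = max_{x ∈ S_k} r(x, S_j)`. -/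
noncomputable def LevelChain.rmax (c : LevelChain S) (k j : ℕ) : ℝ :=
  sSup ((fun x => c.r x j) '' {x | c.lev x = k})

/-- `m` is the mean hitting time of the optimal level `S_0`. -/
def LevelChain.IsMeanHittingTime (c : LevelChain S) (m : S → ℝ) : Prop :=
  (∀ x, 0 ≤ m x) ∧
  (∀ x, c.lev x = 0 → m x = 0) ∧
  (∀ x, c.lev x ≠ 0 → m x = 1 + ∑ y, c.p x y * m y)

/-- `mbar` is the mean level-leaving time on `S ∖ S_0`. -/
def LevelChain.IsLevelLeavingTime (c : LevelChain S) (mbar : S → ℝ) : Prop :=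
  (∀ x, c.lev x ≠ 0 → 0 ≤ mbar x) ∧
  (∀ x, c.lev x ≠ 0 → mbar x = 1 + ∑ y ∈ c.level (c.lev x), c.p x y * mbar y)

/-- `h ℓ x` is the probability of hitting level `S_ℓ` starting from `x`. -/
def LevelChain.IsHitProb (c : LevelChain S) (h : ℕ → S → ℝ) : Prop :=
  (∀ ℓ x, 0 ≤ h ℓ x ∧ h ℓ x ≤ 1) ∧
  (∀ ℓ x, c.lev x = ℓ → h ℓ x = 1) ∧
  (∀ ℓ x, c.lev x < ℓ → h ℓ x = 0) ∧
  (∀ ℓ x, ℓ < c.lev x →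
    h ℓ x = ∑ y ∈ c.levels ℓ (c.lev x), c.p x y * h ℓ y)

/-!
Fix a level `i`, a set `I` of levels above it, and let
`F = h(·,S_i) - Σ_{i' ∈ I} r_min(X_{i'},S_i) h(·,S_{i'})`. For `z ∈ S_m` with `m > i`, the one-step
average of `F` from `z` exceeds `F z` by at most `r_min(X_m,S_i)(1 - p(z,S_m)) ≤ p(z,S_i)`, and
`F = 1` on `S_i`. So if `F ≥ 0` on the levels strictly between `i` and `m`, then
`Σ_{y ∈ S_m} p(z,y) F y ≤ F z`, and since the chain leaves `S_m` with positive probability, `F` is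
nonnegative at its minimum over `S_m`. Induction on the level gives `F ≥ 0` everywhere; the theorem
follows by downward induction on `i`, since `c_{j,i} ≤ Σ_{i'} c_{j,i'} r_min(X_{i'},S_i)
≤ Σ_{i'} r_min(X_{i'},S_i) h(x,S_{i'}) ≤ h(x,S_i)` for `x ∈ S_j`.
-/

namespace LevelChain

variable {c : LevelChain S}

@[simp]
lemma mem_level {x : S} {k : ℕ} : x ∈ c.level k ↔ c.lev x = k := by
  simp [level]

@[simp]
lemma mem_levels {x : S} {i j : ℕ} : x ∈ c.levels i j ↔ i ≤ c.lev x ∧ c.lev x ≤ j := by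
  simp [levels]

lemma pSet_nonneg (x : S) (A : Finset S) : 0 ≤ c.pSet x A :=
  sum_nonneg fun y _ => c.p_nonneg x y

lemma pSet_le_one (x : S) (A : Finset S) : c.pSet x A ≤ 1 := by
  rw [← c.p_row_sum x]
  exact sum_le_sum_of_subset_of_nonneg (subset_univ A) fun y _ _ => c.p_nonneg x y

lemma r_nonneg (x : S) (j : ℕ) : 0 ≤ c.r x j := by
  unfold r
  split_ifs
  · rfl
  · exact div_nonneg (pSet_nonneg _ _) (sub_nonneg.2 (pSet_le_one _ _))

lemma rmin_nonneg (k j : ℕ) : 0 ≤ c.rmin k j :=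
  Real.sInf_nonneg (by rintro _ ⟨x, _, rfl⟩; exact r_nonneg x j)

lemma rmin_le_r {x : S} {k : ℕ} (hx : c.lev x = k) (j : ℕ) : c.rmin k j ≤ c.r x j :=
  csInf_le ((Set.toFinite _).image _).bddBelow ⟨x, hx, rfl⟩

lemma rmin_mul_le_pSet {z : S} {i m : ℕ} (hz : c.lev z = m) (him : i ≠ m) :
    c.rmin m i * (1 - c.pSet z (c.level m)) ≤ c.pSet z (c.level i) := by
  have hd : 0 ≤ 1 - c.pSet z (c.level m) := sub_nonneg.2 (pSet_le_one _ _)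
  rcases hd.eq_or_lt with hd0 | hdpos
  · rw [← hd0, mul_zero]
    exact pSet_nonneg _ _
  · calc c.rmin m i * (1 - c.pSet z (c.level m))
        ≤ c.r z i * (1 - c.pSet z (c.level m)) := mul_le_mul_of_nonneg_right (rmin_le_r hz i) hd
      _ = c.pSet z (c.level i) := by rw [r, if_neg (hz ▸ him), hz, div_mul_cancel₀ _ hdpos.ne']

lemma Reachable.pSet_level_lt_one (hreach : c.Reachable) {x : S} (hx : 1 ≤ c.lev x) :
    c.pSet x (c.level (c.lev x)) < 1 := by
  classical
  have hpos := hreach _ hx (c.lev_le x) x rfl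
  have hdisj : Disjoint (c.level (c.lev x)) (c.levels 0 (c.lev x - 1)) := by
    rw [disjoint_left]
    intro y hy hy'
    simp only [mem_level, mem_levels] at hy hy'
    omega
  have hle := pSet_le_one (c := c) x (c.level (c.lev x) ∪ c.levels 0 (c.lev x - 1))
  rw [pSet, sum_union hdisj] at hle
  unfold pSet at hpos ⊢
  linarith

lemma Reachable.nonneg_of_sum_level_le (hreach : c.Reachable) {m : ℕ} (hm : 1 ≤ m) {f : S → ℝ}
    (hf : ∀ z, c.lev z = m → ∑ y ∈ c.level m, c.p z y * f y ≤ f z) {x : S} (hx : c.lev x = m) :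
    0 ≤ f x := by
  obtain ⟨x₀, hx₀, hmin⟩ := (c.level m).exists_min_image f ⟨x, mem_level.2 hx⟩
  rw [mem_level] at hx₀
  have hlt := hreach.pSet_level_lt_one (x := x₀) (hx₀ ▸ hm)
  rw [hx₀] at hlt
  have hstep : c.pSet x₀ (c.level m) * f x₀ ≤ f x₀ := calc
    c.pSet x₀ (c.level m) * f x₀ = ∑ y ∈ c.level m, c.p x₀ y * f x₀ := sum_mul _ _ _
    _ ≤ ∑ y ∈ c.level m, c.p x₀ y * f y :=
      sum_le_sum fun y hy => mul_le_mul_of_nonneg_left (hmin y hy) (c.p_nonneg _ _)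
    _ ≤ f x₀ := hf x₀ hx₀
  have hx₀_nonneg : 0 ≤ f x₀ := by nlinarith
  exact hx₀_nonneg.trans (hmin x (mem_level.2 hx))

noncomputable def hitSlack (c : LevelChain S) (h : ℕ → S → ℝ) (i : ℕ) (I : Finset ℕ) (y : S) : ℝ :=
  h i y - ∑ i' ∈ I, c.rmin i' i * h i' y

namespace IsHitProb

variable {h : ℕ → S → ℝ} (hh : c.IsHitProb h)
include hh

lemma nonneg (ℓ : ℕ) (x : S) : 0 ≤ h ℓ x := (hh.1 ℓ x).1

lemma eq_one {ℓ : ℕ} {x : S} (hx : c.lev x = ℓ) : h ℓ x = 1 := hh.2.1 ℓ x hx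

lemma eq_zero {ℓ : ℕ} {x : S} (hx : c.lev x < ℓ) : h ℓ x = 0 := hh.2.2.1 ℓ x hx

lemma p_mul_eq_zero {ℓ : ℕ} {z y : S} (hy : c.lev y < ℓ ∨ c.lev z < c.lev y) :
    c.p z y * h ℓ y = 0 := by
  rcases hy with hy | hy
  · rw [hh.eq_zero hy, mul_zero]
  · rw [c.elitist z y hy, zero_mul]

lemma sum_p_mul (ℓ : ℕ) (z : S) :
    ∑ y, c.p z y * h ℓ y = h ℓ z - if c.lev z = ℓ then 1 - c.pSet z (c.level ℓ) else 0 := by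
  rcases lt_trichotomy (c.lev z) ℓ with hlt | heq | hgt
  · rw [if_neg hlt.ne, sub_zero, hh.eq_zero hlt]
    exact sum_eq_zero fun y _ => hh.p_mul_eq_zero (by omega)
  · rw [if_pos heq, hh.eq_one heq, sub_sub_cancel, pSet]
    refine (sum_subset (subset_univ _) fun y _ hy => hh.p_mul_eq_zero ?_).symm.trans
      (sum_congr rfl fun y hy => ?_)
    · rw [mem_level] at hy
      omega
    · rw [hh.eq_one (mem_level.1 hy), mul_one]
  · rw [if_neg hgt.ne', sub_zero, hh.2.2.2 ℓ z hgt]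
    refine (sum_subset (subset_univ _) fun y _ hy => hh.p_mul_eq_zero ?_).symm
    rw [mem_levels] at hy
    omega

lemma sum_p_mul_sum (I : Finset ℕ) (a : ℕ → ℝ) (z : S) :
    ∑ y, c.p z y * ∑ i ∈ I, a i * h i y = ∑ i ∈ I, a i * h i z -
      if c.lev z ∈ I then a (c.lev z) * (1 - c.pSet z (c.level (c.lev z))) else 0 := by
  simp_rw [mul_sum, mul_left_comm (c.p z _)]
  rw [sum_comm]
  simp_rw [← mul_sum, hh.sum_p_mul, mul_sub, sum_sub_distrib, mul_ite, mul_zero, sum_ite_eq]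
  rw [mul_sub]

variable {i : ℕ} {I : Finset ℕ}

lemma hitSlack_of_lev_le (hI : ∀ i' ∈ I, i < i') {y : S} (hy : c.lev y ≤ i) :
    c.hitSlack h i I y = h i y := by
  rw [hitSlack, sum_eq_zero fun i' hi' => ?_, sub_zero]
  rw [hh.eq_zero (hy.trans_lt (hI i' hi')), mul_zero]

lemma sum_p_mul_hitSlack {z : S} (hz : i < c.lev z) :
    ∑ y, c.p z y * c.hitSlack h i I y = c.hitSlack h i I z +
      if c.lev z ∈ I then c.rmin (c.lev z) i * (1 - c.pSet z (c.level (c.lev z))) else 0 := by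
  simp only [hitSlack, mul_sub, sum_sub_distrib]
  rw [hh.sum_p_mul, if_neg hz.ne', hh.sum_p_mul_sum]
  split_ifs <;> ring

lemma sum_level_mul_hitSlack_le (hI : ∀ i' ∈ I, i < i') {m : ℕ} (him : i < m)
    (hbelow : ∀ y, i < c.lev y → c.lev y < m → 0 ≤ c.hitSlack h i I y) {z : S}
    (hz : c.lev z = m) :
    ∑ y ∈ c.level m, c.p z y * c.hitSlack h i I y ≤ c.hitSlack h i I z := by
  classical
  have hlevel_i : ∑ y ∈ c.level i, c.p z y * c.hitSlack h i I y = c.pSet z (c.level i) :=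
    sum_congr rfl fun y hy => by
      rw [hh.hitSlack_of_lev_le hI (mem_level.1 hy).le, hh.eq_one (mem_level.1 hy), mul_one]
  have hdisj : Disjoint (c.level i) (c.level m) := by
    rw [disjoint_left]
    intro y hy hy'
    rw [mem_level] at hy hy'
    omega
  have hsplit : c.pSet z (c.level i) + ∑ y ∈ c.level m, c.p z y * c.hitSlack h i I y ≤
      ∑ y, c.p z y * c.hitSlack h i I y := by
    rw [← hlevel_i, ← sum_union hdisj]
    refine sum_le_sum_of_subset_of_nonneg (subset_univ _) fun y _ hy => ?_
    simp only [mem_union, mem_level, not_or] at hy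
    rcases le_or_gt (c.lev y) i with hyi | hyi
    · rw [hh.hitSlack_of_lev_le hI hyi]
      exact mul_nonneg (c.p_nonneg z y) (hh.nonneg i y)
    rcases lt_or_gt_of_ne hy.2 with hym | hym
    · exact mul_nonneg (c.p_nonneg z y) (hbelow y hyi hym)
    · rw [c.elitist z y (hz ▸ hym), zero_mul]
  have hjump : (if c.lev z ∈ I then c.rmin (c.lev z) i * (1 - c.pSet z (c.level (c.lev z)))
      else 0) ≤ c.pSet z (c.level i) := by
    split_ifs
    · exact rmin_mul_le_pSet rfl (hz ▸ him.ne)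
    · exact pSet_nonneg _ _
  linarith [hh.sum_p_mul_hitSlack (I := I) (hz ▸ him : i < c.lev z)]

lemma hitSlack_nonneg (hreach : c.Reachable) (hI : ∀ i' ∈ I, i < i') (x : S) :
    0 ≤ c.hitSlack h i I x := by
  induction hx : c.lev x using Nat.strong_induction_on generalizing x with
  | _ m ih =>
  rcases le_or_gt m i with hmi | him
  · rw [hh.hitSlack_of_lev_le hI (hx ▸ hmi)]
    exact hh.nonneg i x
  · exact hreach.nonneg_of_sum_level_le (by omega)
      (fun z hz => hh.sum_level_mul_hitSlack_le hI him (fun y _ hy => ih _ hy y rfl) hz) hx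

end IsHitProb

end LevelChain

theorem alt_lower_coefficients_le_hitProb_general
    (c : LevelChain S) (hreach : c.Reachable)
    (h : ℕ → S → ℝ) (hh : c.IsHitProb h)
    (ℓ k : ℕ)
    (cf : ℕ → ℕ → ℝ)
    (hcfdiag : ∀ j, ℓ ≤ j → j ≤ k → cf j j = 1)
    (hrec : ∀ i j, ℓ ≤ i → i < j → j ≤ k →
      cf j i ≤ ∑ i' ∈ Finset.Icc (i + 1) j, cf j i' * c.rmin i' i) :
    ∀ j, ℓ < j → j ≤ k → ∀ x, c.lev x = j → cf j ℓ ≤ h ℓ x := by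
  intro j hℓj hjk x hx
  suffices ∀ i, ℓ ≤ i → i ≤ j → cf j i ≤ h i x from this ℓ le_rfl hℓj.le
  intro i
  induction i using Nat.strong_decreasing_induction with
  | base => exact ⟨j, fun i hji _ hij => absurd hij (not_le.2 hji)⟩
  | step i ih =>
    intro hℓi hij
    obtain rfl | hij := hij.eq_or_lt
    · rw [hcfdiag _ hℓi hjk, hh.eq_one hx]
    have hI : ∀ i' ∈ Icc (i + 1) j, i < i' := fun i' hi' => by
      rw [mem_Icc] at hi'
      omega
    calc cf j i ≤ ∑ i' ∈ Icc (i + 1) j, cf j i' * c.rmin i' i := hrec i j hℓi hij hjk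
      _ ≤ ∑ i' ∈ Icc (i + 1) j, c.rmin i' i * h i' x := sum_le_sum fun i' hi' => by
          rw [mul_comm]
          exact mul_le_mul_of_nonneg_left
            (ih i' (hI i' hi') (hℓi.trans (hI i' hi').le) (mem_Icc.1 hi').2)
            (LevelChain.rmin_nonneg i' i)
      _ ≤ h i x := sub_nonneg.1 (hh.hitSlack_nonneg hreach hI x)

/-- Alternative (backward) lower-bound drift condition: if
`c_{j,j} = 1` and for every `ℓ ≤ i < j ≤ k`,
`c_{j,i} ≤ Σ_{i'=i+1}^{j} c_{j,i'}·r_min(X_{i'},S_i)`,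
then `c_{j,ℓ} ≤ h_min(X_j,S_ℓ)` for every `ℓ < j ≤ k`. -/
theorem alt_lower_coefficients_le_hitProb
    (c : LevelChain S) (hreach : c.Reachable)
    (h : ℕ → S → ℝ) (hh : c.IsHitProb h)
    (ℓ k : ℕ) (hℓ : 1 ≤ ℓ) (hℓk : ℓ < k) (hk : k ≤ c.K)
    (cf : ℕ → ℕ → ℝ)
    (hcf01 : ∀ i j, ℓ ≤ i → i ≤ j → j ≤ k → 0 ≤ cf j i ∧ cf j i ≤ 1)
    (hcfdiag : ∀ j, ℓ ≤ j → j ≤ k → cf j j = 1)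
    (hrec : ∀ i j, ℓ ≤ i → i < j → j ≤ k →
      cf j i ≤ ∑ i' ∈ Finset.Icc (i + 1) j, cf j i' * c.rmin i' i) :
    ∀ j, ℓ < j → j ≤ k → ∀ x, c.lev x = j → cf j ℓ ≤ h ℓ x :=
  alt_lower_coefficients_le_hitProb_general c hreach h hh ℓ k cf hcfdiag hrec
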